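/- The double series ∑_{k=1}^∞ (4k+1) · (−1/2)_k · ((1/2)_k)^3 / ((k+1)! · k!^3) · ∑_{i=1}^{2k} (−1)^{i−1}/i^2 converges to 2/3 − 8/π^2. -/

import Mathlib

/-!
Writing `w n = (2n+1) ((1/2)_n / n!)^2` and `H n` for the inner alternating sum, the partial sums
telescope to the closed form `w n ^ 2 * ((2n+1)/(n+1) * H n - 4n/(2n+1))`, checked by induction.
By Wallis' product `w n = 1 / W n → 2/π`, and `H n → η(2) = π²/12` because it equals
`∑_{i ≤ 2n} 1/i² - ½ ∑_{i ≤ n} 1/i²`. Hence the limit is `(2/π)² (2 · π²/12 - 2) = 2/3 - 8/π²`.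
-/

open Filter Real

/-- Rising factorial (Pochhammer symbol) `(x)_k = x(x+1)⋯(x+k-1)`. -/
noncomputable def poch (x : ℝ) : ℕ → ℝ
  | 0 => 1
  | k + 1 => poch x k * (x + k)

open Topology

lemma poch_succ (x : ℝ) (k : ℕ) : poch x (k + 1) = poch x k * (x + k) := rfl

lemma poch_neg_half_succ (k : ℕ) : poch (-1/2) (k + 1) = -(1/2) * poch (1/2) k := by
  induction k with
  | zero => norm_num [poch]
  | succ k ih =>
    rw [poch_succ, ih, poch_succ]
    push_cast
    ring

lemma poch_half_mul_four_pow_mul_factorial (n : ℕ) :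
    poch (1/2) n * (4 ^ n * n.factorial) = (2 * n).factorial := by
  induction n with
  | zero => simp [poch]
  | succ n ih =>
    rw [poch_succ, Nat.mul_succ, Nat.factorial_succ, Nat.factorial_succ, Nat.factorial_succ]
    push_cast at ih ⊢
    linear_combination (4 * ((n : ℝ) + 1) * (n + 1/2)) * ih

noncomputable def wallisInv (n : ℕ) : ℝ := (2 * n + 1) * (poch (1/2) n / n.factorial) ^ 2

lemma wallisInv_eq_inv_W (n : ℕ) : wallisInv n = (Wallis.W n)⁻¹ := by
  have hpoch : poch (1/2) n = (2 * n).factorial / (4 ^ n * n.factorial) := by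
    rw [← poch_half_mul_four_pow_mul_factorial, mul_div_cancel_right₀ _ (by positivity)]
  have hpow : (2 : ℝ) ^ (4 * n) = (4 ^ n) ^ 2 := by
    rw [← pow_mul, mul_comm n 2, pow_mul, pow_mul]
    norm_num
  rw [wallisInv, hpoch, Wallis.W_eq_factorial_ratio, hpow]
  field_simp

lemma tendsto_wallisInv : Tendsto wallisInv atTop (𝓝 (2 / π)) := by
  have h := Wallis.tendsto_W_nhds_pi_div_two.inv₀ (by positivity)
  rw [inv_div] at h
  exact h.congr fun n => (wallisInv_eq_inv_W n).symm

lemma sum_Icc_one_eq_sum_range_succ {M : Type*} [AddCommMonoid M] (f : ℕ → M) (hf : f 0 = 0)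
    (n : ℕ) : ∑ i ∈ Finset.Icc 1 n, f i = ∑ i ∈ Finset.range (n + 1), f i := by
  rw [Finset.range_eq_Ico, Finset.sum_eq_sum_Ico_succ_bot n.succ_pos, hf, zero_add]
  rfl

lemma tendsto_sum_Icc_one_div_sq :
    Tendsto (fun n : ℕ => ∑ i ∈ Finset.Icc 1 n, 1 / (i : ℝ) ^ 2) atTop (𝓝 (π ^ 2 / 6)) := by
  simp_rw [sum_Icc_one_eq_sum_range_succ (fun i : ℕ => 1 / (i : ℝ) ^ 2) (by simp)]
  exact hasSum_zeta_two.tendsto_sum_nat.comp (tendsto_add_atTop_nat 1)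

noncomputable def altInvSqSum (n : ℕ) : ℝ :=
  ∑ i ∈ Finset.Icc 1 (2 * n), (-1 : ℝ) ^ (i - 1) / (i : ℝ) ^ 2

lemma altInvSqSum_succ (n : ℕ) :
    altInvSqSum (n + 1) = altInvSqSum n + 1 / (2 * n + 1) ^ 2 - 1 / (2 * n + 2) ^ 2 := by
  rw [altInvSqSum, Nat.mul_succ, Finset.sum_Icc_succ_top (by omega),
    Finset.sum_Icc_succ_top (by omega), ← altInvSqSum, Nat.add_sub_cancel, Nat.add_sub_cancel,
    pow_succ (-1 : ℝ) (2 * n), pow_mul]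
  push_cast
  ring

lemma altInvSqSum_eq_sub (n : ℕ) :
    altInvSqSum n = ∑ i ∈ Finset.Icc 1 (2 * n), 1 / (i : ℝ) ^ 2
      - 1 / 2 * ∑ i ∈ Finset.Icc 1 n, 1 / (i : ℝ) ^ 2 := by
  induction n with
  | zero => simp [altInvSqSum]
  | succ n ih =>
    rw [altInvSqSum_succ, ih, Nat.mul_succ, Finset.sum_Icc_succ_top (by omega),
      Finset.sum_Icc_succ_top (by omega), Finset.sum_Icc_succ_top (by omega)]
    push_cast
    field_simp
    ring

lemma tendsto_altInvSqSum : Tendsto altInvSqSum atTop (𝓝 (π ^ 2 / 12)) := by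
  have h := (tendsto_sum_Icc_one_div_sq.comp (tendsto_id.const_mul_atTop' two_pos)).sub
    (tendsto_sum_Icc_one_div_sq.const_mul (1 / 2))
  rw [show π ^ 2 / 6 - 1 / 2 * (π ^ 2 / 6) = π ^ 2 / 12 by ring] at h
  exact h.congr fun n => (altInvSqSum_eq_sub n).symm

lemma sum_Icc_eq_wallisInv_sq_mul (n : ℕ) :
    ∑ k ∈ Finset.Icc 1 n,
      (4 * (k : ℝ) + 1) * poch (-1/2) k * (poch (1/2) k) ^ 3 /
          (((k+1).factorial : ℝ) * (k.factorial : ℝ) ^ 3) * altInvSqSum k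
    = wallisInv n ^ 2 * ((2 * n + 1) / (n + 1) * altInvSqSum n - 4 * n / (2 * n + 1)) := by
  induction n with
  | zero => simp [altInvSqSum]
  | succ n ih =>
    rw [Finset.sum_Icc_succ_top (by omega), ih, altInvSqSum_succ, poch_neg_half_succ]
    simp only [wallisInv, poch_succ, Nat.factorial_succ]
    have hfac := n.factorial_pos
    push_cast
    field_simp
    ring

theorem thm_2_3_1 :
    Tendsto (fun n : ℕ => ∑ k ∈ Finset.Icc 1 n,
      (4 * (k : ℝ) + 1) * poch (-1/2) k * (poch (1/2) k) ^ 3 /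
          (((k+1).factorial : ℝ) * (k.factorial : ℝ) ^ 3) *
        ∑ i ∈ Finset.Icc 1 (2 * k), (-1 : ℝ) ^ (i - 1) / (i : ℝ) ^ 2)
      atTop (nhds (2/3 - 8 / π ^ 2)) := by
  have hratio₁ : Tendsto (fun n : ℕ => (2 * (n : ℝ) + 1) / (n + 1)) atTop (𝓝 2) := by
    convert tendsto_add_mul_div_add_mul_atTop_nhds (1 : ℝ) 1 2 one_ne_zero using 2 <;> ring
  have hratio₂ : Tendsto (fun n : ℕ => 4 * (n : ℝ) / (2 * n + 1)) atTop (𝓝 2) := by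
    convert tendsto_add_mul_div_add_mul_atTop_nhds (0 : ℝ) 1 4 two_ne_zero using 2 <;> ring
  have h := (tendsto_wallisInv.pow 2).mul ((hratio₁.mul tendsto_altInvSqSum).sub hratio₂)
  rw [show (2 / π) ^ 2 * (2 * (π ^ 2 / 12) - 2) = 2 / 3 - 8 / π ^ 2 by field_simp; ring] at h
  exact h.congr fun n => (sum_Icc_eq_wallisInv_sq_mul n).symm
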